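/- arXiv:1710.03910 — 3 statements merged into one kernel-verified Lean document; each statement's English description precedes it below -/
import Mathlib

section
/- For every n ≥ 3 with n ≠ 5, the star chromatic number of the cycle C_n is 3. -/
open SimpleGraph

/-- The cycle graph on `n` vertices, with vertex set `ZMod n` and edges `{i, i+1}`. -/
def zmodCycleGraph (n : ℕ) : SimpleGraph (ZMod n) where
  Adj i j := i ≠ j ∧ (j = i + 1 ∨ i = j + 1)
  symm := by constructor; intro i j h; exact ⟨h.1.symm, h.2.symm⟩
  loopless := by constructor; intro i h; exact h.1 rfl

/-- The splitting graph of the cycle `C_n`: vertices `inl i` are the cycle vertices `v_i`,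
vertices `inr i` are the added vertices `v_i'`, with `v_i'` adjacent to `v_{i-1}` and `v_{i+1}`. -/
def splitCycle (n : ℕ) : SimpleGraph (ZMod n ⊕ ZMod n) where
  Adj u v :=
    match u, v with
    | .inl i, .inl j => i ≠ j ∧ (j = i + 1 ∨ i = j + 1)
    | .inl i, .inr j => i = j + 1 ∨ j = i + 1
    | .inr i, .inl j => j = i + 1 ∨ i = j + 1
    | .inr _, .inr _ => False
  symm := by
    constructor
    rintro (i | i) (j | j) h
    · exact ⟨h.1.symm, h.2.symm⟩
    · exact h
    · exact h
    · exact h.elim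
  loopless := by
    constructor
    rintro (i | i) h
    · exact h.1 rfl
    · exact h

/-- A star coloring: a proper vertex coloring such that no path on 4 vertices is 2-colored. -/
def IsStarColoring {V α : Type*} (G : SimpleGraph V) (c : V → α) : Prop :=
  (∀ u v, G.Adj u v → c u ≠ c v) ∧
  ∀ w x y z, G.Adj w x → G.Adj x y → G.Adj y z → w ≠ y → x ≠ z → w ≠ z →
    ¬(c w = c y ∧ c x = c z)

/-- The star chromatic number: the least `k` admitting a star coloring with `k` colors. -/
noncomputable def starChromaticNumber {V : Type*} (G : SimpleGraph V) : ℕ :=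
  sInf {k | ∃ c : V → Fin k, IsStarColoring G c}


def GoodSeq (n : ℕ) (σ : ℕ → Fin 3) : Prop :=
  (∀ j, σ (j + n) = σ j) ∧ (∀ j, σ j ≠ σ (j + 1)) ∧
    (∀ j, ¬(σ j = σ (j + 2) ∧ σ (j + 1) = σ (j + 3))) ∧
    σ 0 = 0 ∧ σ 1 = 1 ∧ σ 2 = 2

def sigma3 : ℕ → Fin 3 := fun j => ⟨j % 3, Nat.mod_lt _ (by norm_num)⟩

lemma good3 : GoodSeq 3 sigma3 := by
  refine ⟨?_, ?_, ?_, rfl, rfl, rfl⟩ <;> intro j <;>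
    simp only [sigma3, Fin.mk.injEq, ne_eq, not_and] <;> omega

def sigma4 : ℕ → Fin 3 := fun j =>
  if j % 4 = 0 then 0 else if j % 4 = 1 then 1 else if j % 4 = 2 then 2 else 1

lemma sigma4_p1 : ∀ j, sigma4 j ≠ sigma4 (j + 1) := by
  intro j
  have h : j % 4 = 0 ∨ j % 4 = 1 ∨ j % 4 = 2 ∨ j % 4 = 3 := by omega
  rcases h with h | h | h | h
  · simp [sigma4, h, show (j+1) % 4 = 1 by omega]
  · simp [sigma4, h, show (j+1) % 4 = 2 by omega]
  · simp [sigma4, h, show (j+1) % 4 = 3 by omega]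
  · simp [sigma4, h, show (j+1) % 4 = 0 by omega]

lemma sigma4_p2 : ∀ j, ¬(sigma4 j = sigma4 (j + 2) ∧ sigma4 (j + 1) = sigma4 (j + 3)) := by
  intro j
  have h : j % 4 = 0 ∨ j % 4 = 1 ∨ j % 4 = 2 ∨ j % 4 = 3 := by omega
  rcases h with h | h | h | h
  · simp [sigma4, h, show (j+1) % 4 = 1 by omega, show (j+2) % 4 = 2 by omega,
      show (j+3) % 4 = 3 by omega]
  · simp [sigma4, h, show (j+1) % 4 = 2 by omega, show (j+2) % 4 = 3 by omega,
      show (j+3) % 4 = 0 by omega]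
  · simp [sigma4, h, show (j+1) % 4 = 3 by omega, show (j+2) % 4 = 0 by omega,
      show (j+3) % 4 = 1 by omega]
  · simp [sigma4, h, show (j+1) % 4 = 0 by omega, show (j+2) % 4 = 1 by omega,
      show (j+3) % 4 = 2 by omega]

lemma sigma4_e : sigma4 0 = 0 ∧ sigma4 1 = 1 ∧ sigma4 2 = 2 := by
  refine ⟨?_, ?_, ?_⟩ <;> norm_num [sigma4]

lemma good4 : GoodSeq 4 sigma4 := by
  refine ⟨?_, sigma4_p1, sigma4_p2, sigma4_e.1, sigma4_e.2.1, sigma4_e.2.2⟩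
  intro j
  simp only [sigma4]
  rw [show (j + 4) % 4 = j % 4 by omega]

lemma good8 : GoodSeq 8 sigma4 := by
  refine ⟨?_, sigma4_p1, sigma4_p2, sigma4_e.1, sigma4_e.2.1, sigma4_e.2.2⟩
  intro j
  simp only [sigma4]
  rw [show (j + 8) % 4 = j % 4 by omega]

lemma periodic_mod {n : ℕ} (hn : 0 < n) (σ : ℕ → Fin 3) (hper : ∀ j, σ (j + n) = σ j) :
    ∀ m, σ m = σ (m % n) := by
  intro m
  induction m using Nat.strong_induction_on with
  | _ m ih =>
    rcases lt_or_ge m n with hm | hm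
    · rw [Nat.mod_eq_of_lt hm]
    · have hmn : m - n + n = m := by omega
      calc σ m = σ (m - n + n) := by rw [hmn]
        _ = σ (m - n) := hper _
        _ = σ ((m - n) % n) := ih _ (by omega)
        _ = σ (m % n) := by rw [← Nat.mod_eq_sub_mod hm]

def auxF (σ : ℕ → Fin 3) : ℕ → Fin 3 := fun r =>
  if r = 0 then 0 else if r = 1 then 1 else if r = 2 then 2 else σ (r - 3)

lemma auxF_ge (σ : ℕ → Fin 3) (r : ℕ) (h : 3 ≤ r) : auxF σ r = σ (r - 3) := by
  unfold auxF
  rw [if_neg (by omega), if_neg (by omega), if_neg (by omega)]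

lemma auxF_0 (σ : ℕ → Fin 3) : auxF σ 0 = 0 := rfl
lemma auxF_1 (σ : ℕ → Fin 3) : auxF σ 1 = 1 := rfl
lemma auxF_2 (σ : ℕ → Fin 3) : auxF σ 2 = 2 := rfl

def stepSeq (n : ℕ) (σ : ℕ → Fin 3) : ℕ → Fin 3 := fun j => auxF σ (j % (n + 3))

lemma stepSeq_add (n : ℕ) (σ : ℕ → Fin 3) (j k : ℕ) :
    stepSeq n σ (j + k) = auxF σ ((j % (n + 3) + k) % (n + 3)) := by
  simp only [stepSeq]
  congr 1
  conv_lhs => rw [Nat.add_mod]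
  conv_rhs => rw [Nat.add_mod, Nat.mod_mod_of_dvd _ dvd_rfl]

lemma goodSeq_step (n : ℕ) (hn : 3 ≤ n) (σ : ℕ → Fin 3) (h : GoodSeq n σ) :
    GoodSeq (n + 3) (stepSeq n σ) := by
  obtain ⟨hper, h1, h2, e0, e1, e2⟩ := h
  have sn : σ n = 0 := by have := hper 0; rwa [zero_add, e0] at this
  have sn1 : σ (n + 1) = 1 := by have := hper 1; rwa [add_comm 1 n, e1] at this
  have sn2 : σ (n + 2) = 2 := by have := hper 2; rwa [add_comm 2 n, e2] at this
  have hbase : ∀ j, stepSeq n σ j = auxF σ (j % (n + 3)) := fun _ => rfl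
  have hms : ∀ a : ℕ, a < n + 3 → a % (n + 3) = a := fun a ha => Nat.mod_eq_of_lt ha
  refine ⟨?_, ?_, ?_, ?_, ?_, ?_⟩
  · intro j
    simp only [stepSeq]
    rw [Nat.add_mod_right]
  · -- proper
    intro j
    have hr : j % (n + 3) < n + 3 := Nat.mod_lt _ (by omega)
    rw [hbase j, stepSeq_add]
    set r := j % (n + 3) with hrdef
    clear_value r
    have hc : r = 0 ∨ r = 1 ∨ r = 2 ∨ (3 ≤ r ∧ r + 3 < n + 3) ∨ r = n ∨ r = n + 1 ∨ r = n + 2 := by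
      omega
    rcases hc with h | h | h | ⟨ha, hb⟩ | h | h | h
    · rw [h, hms (0 + 1) (by omega), auxF_0, auxF_1]; decide
    · rw [h, hms (1 + 1) (by omega), auxF_1, auxF_2]; decide
    · rw [h, hms (2 + 1) (by omega), auxF_2, auxF_ge σ (2 + 1) (by omega),
        show 2 + 1 - 3 = 0 by omega, e0]
      decide
    · rw [hms (r + 1) (by omega), auxF_ge σ r (by omega), auxF_ge σ (r + 1) (by omega)]
      have := h1 (r - 3)
      rwa [show r - 3 + 1 = r + 1 - 3 by omega] at this
    · rw [h, hms (n + 1) (by omega), auxF_ge σ n (by omega), auxF_ge σ (n + 1) (by omega)]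
      have := h1 (n - 3)
      rwa [show n - 3 + 1 = n + 1 - 3 by omega] at this
    · rw [h, hms (n + 1 + 1) (by omega), auxF_ge σ (n + 1) (by omega),
        auxF_ge σ (n + 1 + 1) (by omega)]
      rw [show n + 1 - 3 = n - 2 by omega, show n + 1 + 1 - 3 = n - 2 + 1 by omega]
      exact h1 (n - 2)
    · rw [h, show (n + 2 + 1) % (n + 3) = 0 by rw [show n + 2 + 1 = n + 3 by omega]; exact Nat.mod_self _,
        auxF_0, auxF_ge σ (n + 2) (by omega)]
      rw [show n + 2 - 3 = n - 1 by omega]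
      have := h1 (n - 1)
      rwa [show n - 1 + 1 = n by omega, sn] at this
  · -- star
    intro j
    have hr : j % (n + 3) < n + 3 := Nat.mod_lt _ (by omega)
    rw [hbase j, stepSeq_add, stepSeq_add, stepSeq_add]
    set r := j % (n + 3) with hrdef
    clear_value r
    have hc : r = 0 ∨ r = 1 ∨ r = 2 ∨ (3 ≤ r ∧ r + 3 < n + 3) ∨ r = n ∨ r = n + 1 ∨ r = n + 2 := by
      omega
    rcases hc with h | h | h | ⟨ha, hb⟩ | h | h | h
    · rw [h, hms (0 + 2) (by omega), auxF_0, auxF_2]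
      rintro ⟨hcontra, -⟩
      exact absurd hcontra (by decide)
    · rw [h, hms (1 + 2) (by omega), auxF_1, auxF_ge σ (1 + 2) (by omega),
        show 1 + 2 - 3 = 0 by omega, e0]
      rintro ⟨hcontra, -⟩
      exact absurd hcontra (by decide)
    · rw [h, hms (2 + 2) (by omega), auxF_2, auxF_ge σ (2 + 2) (by omega),
        show 2 + 2 - 3 = 1 by omega, e1]
      rintro ⟨hcontra, -⟩
      exact absurd hcontra (by decide)
    · rw [hms (r + 1) (by omega), hms (r + 2) (by omega), hms (r + 3) (by omega),
        auxF_ge σ r (by omega), auxF_ge σ (r + 1) (by omega), auxF_ge σ (r + 2) (by omega),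
        auxF_ge σ (r + 3) (by omega)]
      have := h2 (r - 3)
      rwa [show r - 3 + 1 = r + 1 - 3 by omega, show r - 3 + 2 = r + 2 - 3 by omega,
        show r - 3 + 3 = r + 3 - 3 by omega] at this
    · rw [h, hms (n + 1) (by omega), hms (n + 2) (by omega),
        show (n + 3) % (n + 3) = 0 from Nat.mod_self _,
        auxF_ge σ n (by omega), auxF_ge σ (n + 1) (by omega), auxF_ge σ (n + 2) (by omega),
        auxF_0]
      have := h2 (n - 3)
      rwa [show n - 3 + 1 = n + 1 - 3 by omega, show n - 3 + 2 = n + 2 - 3 by omega,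
        show n - 3 + 3 = n by omega, sn] at this
    · rw [h, hms (n + 1 + 1) (by omega),
        show (n + 1 + 2) % (n + 3) = 0 by rw [show n + 1 + 2 = n + 3 by omega]; exact Nat.mod_self _,
        show (n + 1 + 3) % (n + 3) = 1 by
          rw [show n + 1 + 3 = n + 3 + 1 by omega, Nat.add_mod_left]; exact hms 1 (by omega),
        auxF_ge σ (n + 1) (by omega), auxF_ge σ (n + 1 + 1) (by omega), auxF_0, auxF_1]
      rw [show n + 1 - 3 = n - 2 by omega, show n + 1 + 1 - 3 = n - 2 + 1 by omega]
      have := h2 (n - 2)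
      rwa [show n - 2 + 2 = n by omega, show n - 2 + 3 = n + 1 by omega, sn, sn1] at this
    · rw [h,
        show (n + 2 + 1) % (n + 3) = 0 by rw [show n + 2 + 1 = n + 3 by omega]; exact Nat.mod_self _,
        show (n + 2 + 2) % (n + 3) = 1 by
          rw [show n + 2 + 2 = n + 3 + 1 by omega, Nat.add_mod_left]; exact hms 1 (by omega),
        show (n + 2 + 3) % (n + 3) = 2 by
          rw [show n + 2 + 3 = n + 3 + 2 by omega, Nat.add_mod_left]; exact hms 2 (by omega),
        auxF_ge σ (n + 2) (by omega), auxF_0, auxF_1, auxF_2]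
      rintro ⟨-, h02⟩
      exact absurd h02 (by decide)
  · rw [hbase 0, hms 0 (by omega)]; rfl
  · rw [hbase 1, hms 1 (by omega)]; rfl
  · rw [hbase 2, hms 2 (by omega)]; rfl

lemma exists_good : ∀ n, 3 ≤ n → n ≠ 5 → ∃ σ, GoodSeq n σ := by
  intro n
  induction n using Nat.strong_induction_on with
  | _ n ih =>
    intro hn h5
    by_cases h : n < 9
    · interval_cases n
      · exact ⟨_, good3⟩
      · exact ⟨_, good4⟩
      · exact absurd rfl h5
      · exact ⟨_, goodSeq_step 3 (by omega) _ good3⟩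
      · exact ⟨_, goodSeq_step 4 (by omega) _ good4⟩
      · exact ⟨_, good8⟩
    · obtain ⟨σ, hσ⟩ := ih (n - 3) (by omega) (by omega) (by omega)
      have := goodSeq_step (n - 3) (by omega) σ hσ
      rw [show n - 3 + 3 = n by omega] at this
      exact ⟨_, this⟩

lemma lower_bound (n k : ℕ) (hn : 3 ≤ n) (c : ZMod n → Fin k)
    (hc : IsStarColoring (zmodCycleGraph n) c) : 3 ≤ k := by
  haveI : NeZero n := ⟨by omega⟩
  obtain ⟨hp, hs⟩ := hc
  rcases eq_or_lt_of_le hn with h3 | h4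
  · -- n = 3 : triangle
    subst h3
    have a01 : (zmodCycleGraph 3).Adj 0 1 := ⟨by decide, Or.inl (by decide)⟩
    have a12 : (zmodCycleGraph 3).Adj 1 2 := ⟨by decide, Or.inl (by decide)⟩
    have a20 : (zmodCycleGraph 3).Adj 2 0 := ⟨by decide, Or.inl (by decide)⟩
    have d01 := hp 0 1 a01
    have d12 := hp 1 2 a12
    have d20 := hp 2 0 a20
    have l0 := (c 0).isLt
    have l1 := (c 1).isLt
    have l2 := (c 2).isLt
    have v01 : (c 0).val ≠ (c 1).val := fun h => d01 (Fin.ext h)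
    have v12 : (c 1).val ≠ (c 2).val := fun h => d12 (Fin.ext h)
    have v20 : (c 2).val ≠ (c 0).val := fun h => d20 (Fin.ext h)
    omega
  · -- n ≥ 4 : use the path 0,1,2,3
    have hcastinj : ∀ a b : ℕ, a < n → b < n → (a : ZMod n) = (b : ZMod n) → a = b := by
      intro a b ha hb hab
      have := congrArg ZMod.val hab
      rwa [ZMod.val_natCast, ZMod.val_natCast, Nat.mod_eq_of_lt ha, Nat.mod_eq_of_lt hb] at this
    have hne : ∀ a b : ℕ, a < n → b < n → a ≠ b → (a : ZMod n) ≠ (b : ZMod n) :=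
      fun a b ha hb hab h => hab (hcastinj a b ha hb h)
    have n01 : (0 : ZMod n) ≠ 1 := by
      have := hne 0 1 (by omega) (by omega) (by omega); simpa using this
    have n12 : (1 : ZMod n) ≠ 2 := by
      have := hne 1 2 (by omega) (by omega) (by omega); simpa using this
    have n23 : (2 : ZMod n) ≠ 3 := by
      have := hne 2 3 (by omega) (by omega) (by omega); simpa using this
    have n02 : (0 : ZMod n) ≠ 2 := by
      have := hne 0 2 (by omega) (by omega) (by omega); simpa using this
    have n13 : (1 : ZMod n) ≠ 3 := by
      have := hne 1 3 (by omega) (by omega) (by omega); simpa using this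
    have n03 : (0 : ZMod n) ≠ 3 := by
      have := hne 0 3 (by omega) (by omega) (by omega); simpa using this
    have a01 : (zmodCycleGraph n).Adj 0 1 := ⟨n01, Or.inl (zero_add 1).symm⟩
    have a12 : (zmodCycleGraph n).Adj 1 2 := ⟨n12, Or.inl one_add_one_eq_two.symm⟩
    have a23 : (zmodCycleGraph n).Adj 2 3 := ⟨n23, Or.inl two_add_one_eq_three.symm⟩
    have star := hs 0 1 2 3 a01 a12 a23 n02 n13 n03
    have d01 := hp 0 1 a01
    have d12 := hp 1 2 a12
    have d23 := hp 2 3 a23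
    by_contra hk
    push_neg at hk
    have l0 := (c 0).isLt
    have l1 := (c 1).isLt
    have l2 := (c 2).isLt
    have l3 := (c 3).isLt
    have v01 : (c 0).val ≠ (c 1).val := fun h => d01 (Fin.ext h)
    have v12 : (c 1).val ≠ (c 2).val := fun h => d12 (Fin.ext h)
    have v23 : (c 2).val ≠ (c 3).val := fun h => d23 (Fin.ext h)
    exact star ⟨Fin.ext (by omega), Fin.ext (by omega)⟩

lemma path_structure (n : ℕ) (w x y z : ZMod n)
    (hwx : (zmodCycleGraph n).Adj w x) (hxy : (zmodCycleGraph n).Adj x y)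
    (hyz : (zmodCycleGraph n).Adj y z) (hwy : w ≠ y) (hxz : x ≠ z) :
    (x = w + 1 ∧ y = w + 2 ∧ z = w + 3) ∨ (y = z + 1 ∧ x = z + 2 ∧ w = z + 3) := by
  obtain ⟨-, hwx⟩ := hwx
  obtain ⟨-, hxy⟩ := hxy
  obtain ⟨-, hyz⟩ := hyz
  rcases hwx with h | h
  · rcases hxy with h' | h'
    · rcases hyz with h'' | h''
      · left
        refine ⟨h, ?_, ?_⟩
        · rw [h', h]; ring
        · rw [h'', h', h]; ring
      · exfalso; apply hxz; have : x + 1 = z + 1 := by rw [← h', h'']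
        exact add_right_cancel this
    · exfalso; apply hwy; have : w + 1 = y + 1 := by rw [← h, h']
      exact add_right_cancel this
  · rcases hxy with h' | h'
    · exfalso; apply hwy; rw [h, ← h']
    · rcases hyz with h'' | h''
      · exfalso; apply hxz; rw [h', ← h'']
      · right
        refine ⟨h'', ?_, ?_⟩
        · rw [h', h'']; ring
        · rw [h, h', h'']; ring

lemma upper_bound (n : ℕ) (hn : 3 ≤ n) (σ : ℕ → Fin 3) (hσ : GoodSeq n σ) :
    IsStarColoring (zmodCycleGraph n) (fun i => σ (ZMod.val i)) := by
  haveI : NeZero n := ⟨by omega⟩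
  obtain ⟨hper, h1, h2, -, -, -⟩ := hσ
  have hmod := periodic_mod (by omega : 0 < n) σ hper
  have hcast : ∀ (i : ZMod n) (k : ℕ), σ ((i + (k : ℕ)).val) = σ (i.val + k) := by
    intro i k
    rw [ZMod.val_add, ZMod.val_natCast, hmod (i.val + k), Nat.add_mod_mod]
  have k1 : ∀ i : ZMod n, σ ((i + 1).val) = σ (i.val + 1) := by
    intro i
    have := hcast i 1
    rwa [Nat.cast_one] at this
  have k2 : ∀ i : ZMod n, σ ((i + 2).val) = σ (i.val + 2) := by
    intro i
    have := hcast i 2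
    rwa [Nat.cast_ofNat] at this
  have k3 : ∀ i : ZMod n, σ ((i + 3).val) = σ (i.val + 3) := by
    intro i
    have := hcast i 3
    rwa [Nat.cast_ofNat] at this
  constructor
  · intro u v huv
    obtain ⟨-, h | h⟩ := huv
    · simp only
      rw [h, k1 u]
      exact h1 u.val
    · simp only
      rw [h, k1 v]
      exact (h1 v.val).symm
  · intro w x y z hwx hxy hyz hwy hxz hwz
    rcases path_structure n w x y z hwx hxy hyz hwy hxz with ⟨hx, hy, hz⟩ | ⟨hy, hx, hw⟩
    · subst hx; subst hy; subst hz
      simp only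
      rw [k1 w, k2 w, k3 w]
      exact h2 w.val
    · subst hy; subst hx; subst hw
      simp only
      rw [k1 z, k2 z, k3 z]
      rintro ⟨hA, hB⟩
      exact h2 z.val ⟨hB.symm, hA.symm⟩

theorem stmt_1 (n : ℕ) (hn : 3 ≤ n) (h5 : n ≠ 5) :
    starChromaticNumber (zmodCycleGraph n) = 3 := by
  have h3mem : 3 ∈ {k | ∃ c : ZMod n → Fin k, IsStarColoring (zmodCycleGraph n) c} := by
    obtain ⟨σ, hσ⟩ := exists_good n hn h5
    exact ⟨fun i => σ (ZMod.val i), upper_bound n hn σ hσ⟩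
  refine le_antisymm (Nat.sInf_le h3mem) (le_csInf ⟨3, h3mem⟩ ?_)
  rintro k ⟨c, hc⟩
  exact lower_bound n k hn c hc
end

section
/- For every n ≥ 3, any star coloring of the splitting graph S(C_n) uses at least 4 colors. -/
open SimpleGraph

theorem stmt_3 (n : ℕ) (hn : 3 ≤ n) {α : Type*} (c : ZMod n ⊕ ZMod n → α)
    (hc : IsStarColoring (splitCycle n) c) :
    ∃ a b d e : ZMod n ⊕ ZMod n,
      c a ≠ c b ∧ c a ≠ c d ∧ c a ≠ c e ∧ c b ≠ c d ∧ c b ≠ c e ∧ c d ≠ c e := by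
  obtain ⟨hp, hs⟩ := hc
  by_contra hgoal
  push_neg at hgoal
  haveI : NeZero n := ⟨by omega⟩
  have h1 : (1 : ZMod n) ≠ 0 := by
    intro h
    have h2 := (ZMod.natCast_eq_zero_iff 1 n).mp (by exact_mod_cast h)
    exact absurd (Nat.le_of_dvd (by omega) h2) (by omega)
  have h2 : (2 : ZMod n) ≠ 0 := by
    intro h
    have h2 := (ZMod.natCast_eq_zero_iff 2 n).mp (by exact_mod_cast h)
    exact absurd (Nat.le_of_dvd (by omega) h2) (by omega)
  have ne1 : ∀ i j : ZMod n, j = i + 1 → i ≠ j := by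
    intro i j h hij; rw [hij] at h; exact h1 (by linear_combination -h)
  have ne2 : ∀ i j : ZMod n, j = i + 2 → i ≠ j := by
    intro i j h hij; rw [hij] at h; exact h2 (by linear_combination -h)
  -- adjacency helpers
  have adjLL : ∀ i j : ZMod n, j = i + 1 → (splitCycle n).Adj (.inl i) (.inl j) :=
    fun i j h => ⟨ne1 i j h, Or.inl h⟩
  have adjLR : ∀ i j : ZMod n, j = i + 1 → (splitCycle n).Adj (.inl i) (.inr j) :=
    fun i j h => Or.inr h
  have adjLRr : ∀ i j : ZMod n, i = j + 1 → (splitCycle n).Adj (.inl i) (.inr j) :=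
    fun i j h => Or.inl h
  have adjRL : ∀ i j : ZMod n, j = i + 1 → (splitCycle n).Adj (.inr i) (.inl j) :=
    fun i j h => Or.inl h
  -- Step 1: some i with c(inl i) ≠ c(inl (i+2))
  have step1 : ∃ i : ZMod n, c (.inl i) ≠ c (.inl (i + 2)) := by
    by_contra hall
    push_neg at hall
    by_cases h3 : (3 : ZMod n) = 0
    · exact hp (.inl 0) (.inl 2) ⟨ne2 0 2 (by ring), Or.inr (by linear_combination -h3)⟩
        (by simpa using hall 0)
    · refine hs (.inl 0) (.inl 1) (.inl 2) (.inl 3)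
        (adjLL 0 1 (by ring)) (adjLL 1 2 (by ring)) (adjLL 2 3 (by ring))
        (by simp; exact ne2 0 2 (by ring)) (by simp; exact ne2 1 3 (by ring))
        (by simp; intro h; exact h3 h.symm)
        ⟨by simpa using hall 0, by simpa [show ((1:ZMod n)+2) = 3 by norm_num] using hall 1⟩
  obtain ⟨i, had⟩ := step1
  set A := c (.inl i) with hA
  set B := c (.inl (i + 1)) with hB
  set D := c (.inl (i + 2)) with hD
  have hab : A ≠ B := hp _ _ (adjLL i (i + 1) rfl)
  have hbd : B ≠ D := hp _ _ (adjLL (i + 1) (i + 2) (by ring))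
  -- only three colors
  have key : ∀ v, c v = A ∨ c v = B ∨ c v = D := by
    intro v
    by_contra hv
    push_neg at hv
    exact hbd (hgoal v (.inl i) (.inl (i + 1)) (.inl (i + 2)) hv.1 hv.2.1 hv.2.2 hab had)
  -- Lemma A: not both split vertices at consecutive positions copy their base colors
  have lemA : ∀ j : ZMod n,
      ¬(c (.inr j) = c (.inl j) ∧ c (.inl (j + 1)) = c (.inr (j + 1))) := by
    intro j
    exact hs (.inr j) (.inl (j + 1)) (.inl j) (.inr (j + 1))
      (adjRL j (j + 1) rfl) ((adjLL j (j + 1) rfl).symm) (adjLR j (j + 1) rfl)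
      (by simp) (by simp) (by simp; exact fun h => h1 h)
  -- forced colors
  have dB : c (.inr (i + 1)) = B := by
    rcases key (.inr (i + 1)) with h | h | h
    · exact absurd h.symm (hp _ _ (adjLR i (i + 1) rfl))
    · exact h
    · exact absurd h (hp _ _ (adjRL (i + 1) (i + 2) (by ring)))
  have dA : c (.inr (i + 2)) = A := by
    rcases key (.inr (i + 2)) with h | h | h
    · exact h
    · exact absurd h.symm (hp _ _ (adjLR (i + 1) (i + 2) (by ring)))
    · have lA := lemA (i + 1)
      rw [show (i + 1 + 1 : ZMod n) = i + 2 from by ring] at lA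
      exact absurd ⟨dB, h.symm⟩ lA
  have dD : c (.inr i) = D := by
    rcases key (.inr i) with h | h | h
    · exact absurd ⟨h, dB.symm⟩ (lemA i)
    · exact absurd h (hp _ _ (adjRL i (i + 1) rfl))
    · exact h
  have cB : c (.inl (i - 1)) = B := by
    rcases key (.inl (i - 1)) with h | h | h
    · exact absurd h.symm (hp _ _ (adjLL (i - 1) i (by ring))).symm
    · exact h
    · exact absurd (h.trans dD.symm) (hp _ _ (adjLR (i - 1) i (by ring)))
  exact hs (.inl (i - 1)) (.inl i) (.inl (i + 1)) (.inr (i + 2))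
    (adjLL (i - 1) i (by ring)) (adjLL i (i + 1) rfl) (adjLR (i + 1) (i + 2) (by ring))
    (by simp only [ne_eq, Sum.inl.injEq]; exact fun h => ne2 (i - 1) (i + 1) (by ring) h)
    (by simp) (by simp)
    ⟨cB, dA.symm⟩
end

section
/- If n ≥ 3, n ≢ 1 (mod 3), and n ≠ 5, then the star chromatic number of the splitting graph S(C_n) equals 4. -/
open SimpleGraph

/-- Local window predicate for our colorings: `v0 v1 v2 v3` are the (cycle, split) color
pairs at four consecutive positions; the conjuncts rule out all locally-bad configurations. -/
abbrev P (v0 v1 v2 v3 : Fin 4 × Fin 4) : Prop :=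
  v0.1 ≠ v1.1 ∧ v0.1 ≠ v1.2 ∧ v0.2 ≠ v1.1 ∧
  ¬(v0.1 = v2.1 ∧ v1.1 = v3.1) ∧
  ¬(v0.1 = v2.1 ∧ v1.1 = v1.2) ∧
  ¬(v0.1 = v2.1 ∧ v1.1 = v3.2) ∧
  ¬(v0.1 = v2.2 ∧ v1.1 = v3.1) ∧
  ¬(v0.1 = v2.1 ∧ v1.2 = v1.1) ∧
  ¬(v0.1 = v2.1 ∧ v1.2 = v3.1) ∧
  ¬(v0.1 = v2.1 ∧ v1.2 = v3.2) ∧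
  ¬(v1.1 = v1.2 ∧ v0.1 = v2.1) ∧
  ¬(v2.1 = v0.1 ∧ v1.1 = v1.2) ∧
  ¬(v3.1 = v1.1 ∧ v2.1 = v0.2) ∧
  ¬(v3.1 = v1.1 ∧ v2.2 = v0.2) ∧
  ¬(v0.2 = v0.1 ∧ v1.1 = v1.2) ∧
  ¬(v0.2 = v2.1 ∧ v1.1 = v1.2) ∧
  ¬(v0.2 = v2.1 ∧ v1.1 = v3.2) ∧
  ¬(v1.2 = v1.1 ∧ v0.1 = v2.2)

theorem star_of_windows {n : ℕ} (f : ZMod n → Fin 4 × Fin 4)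
    (hP : ∀ m : ZMod n, P (f m) (f (m+1)) (f (m+1+1)) (f (m+1+1+1))) :
    IsStarColoring (splitCycle n)
      (fun v => match v with | .inl i => (f i).1 | .inr i => (f i).2) := by
  constructor
  · rintro (i|i) (j|j) h
    · rcases h with ⟨-, rfl | rfl⟩
      · exact (hP i).1
      · exact ((hP j).1).symm
    · rcases h with rfl | rfl
      · exact ((hP j).2.2.1).symm
      · exact (hP i).2.1
    · rcases h with rfl | rfl
      · exact (hP i).2.2.1
      · exact ((hP j).2.1).symm
    · exact h.elim
  · rintro (i|i) (j|j) (k|k) (l|l) h1 h2 h3 hwy hxz hwz ⟨e1, e2⟩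
    -- shape LLLL
    ·
      rcases h1 with ⟨-, rfl | rfl⟩
      ·
        rcases h2 with ⟨-, rfl | h2⟩
        ·
          rcases h3 with ⟨-, rfl | h3⟩
          ·
            obtain ⟨-,-,-,f1,f2,f3,f4,f5,f6,f7,f8,f9,f10,f11,f12,f13,f14,f15⟩ := hP (i)
            exact f1 ⟨e1, e2⟩
          ·
            obtain rfl := add_right_cancel h3
            exact hxz rfl
        ·
          obtain rfl := add_right_cancel h2
          rcases h3 with ⟨-, rfl | rfl⟩
          ·
            exact hwy rfl
          ·
            exact hwy rfl
      ·
        rcases h2 with ⟨-, rfl | rfl⟩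
        ·
          rcases h3 with ⟨-, rfl | h3⟩
          ·
            exact hwy rfl
          ·
            obtain rfl := add_right_cancel h3
            exact hwy rfl
        ·
          rcases h3 with ⟨-, rfl | rfl⟩
          ·
            exact hxz rfl
          ·
            obtain ⟨-,-,-,f1,f2,f3,f4,f5,f6,f7,f8,f9,f10,f11,f12,f13,f14,f15⟩ := hP (l)
            exact f1 ⟨e2.symm, e1.symm⟩
    -- shape LLLR
    ·
      rcases h1 with ⟨-, rfl | rfl⟩
      ·
        rcases h2 with ⟨-, rfl | h2⟩
        ·
          rcases h3 with h3 | rfl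
          ·
            obtain rfl := add_right_cancel h3
            obtain ⟨-,-,-,f1,f2,f3,f4,f5,f6,f7,f8,f9,f10,f11,f12,f13,f14,f15⟩ := hP (i)
            exact f2 ⟨e1, e2⟩
          ·
            obtain ⟨-,-,-,f1,f2,f3,f4,f5,f6,f7,f8,f9,f10,f11,f12,f13,f14,f15⟩ := hP (i)
            exact f3 ⟨e1, e2⟩
        ·
          obtain rfl := add_right_cancel h2
          rcases h3 with rfl | rfl
          ·
            exact hwy rfl
          ·
            exact hwy rfl
      ·
        rcases h2 with ⟨-, rfl | rfl⟩
        ·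
          rcases h3 with h3 | rfl
          ·
            obtain rfl := add_right_cancel h3
            exact hwy rfl
          ·
            exact hwy rfl
        ·
          rcases h3 with rfl | rfl
          ·
            obtain ⟨-,-,-,f1,f2,f3,f4,f5,f6,f7,f8,f9,f10,f11,f12,f13,f14,f15⟩ := hP (l)
            exact f10 ⟨e1, e2⟩
          ·
            obtain ⟨-,-,-,f1,f2,f3,f4,f5,f6,f7,f8,f9,f10,f11,f12,f13,f14,f15⟩ := hP (k)
            exact f9 ⟨e1, e2⟩
    -- shape LLRL
    ·
      rcases h1 with ⟨-, rfl | rfl⟩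
      ·
        rcases h2 with h2 | rfl
        ·
          obtain rfl := add_right_cancel h2
          rcases h3 with rfl | rfl
          ·
            exact hxz rfl
          ·
            obtain ⟨-,-,-,f1,f2,f3,f4,f5,f6,f7,f8,f9,f10,f11,f12,f13,f14,f15⟩ := hP (l)
            exact f5 ⟨e2.symm, e1.symm⟩
        ·
          rcases h3 with rfl | h3
          ·
            obtain ⟨-,-,-,f1,f2,f3,f4,f5,f6,f7,f8,f9,f10,f11,f12,f13,f14,f15⟩ := hP (i)
            exact f4 ⟨e1, e2⟩
          ·
            obtain rfl := add_right_cancel h3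
            exact hxz rfl
      ·
        rcases h2 with rfl | rfl
        ·
          rcases h3 with rfl | rfl
          ·
            exact hxz rfl
          ·
            obtain ⟨-,-,-,f1,f2,f3,f4,f5,f6,f7,f8,f9,f10,f11,f12,f13,f14,f15⟩ := hP (l)
            exact f6 ⟨e2.symm, e1.symm⟩
        ·
          rcases h3 with rfl | h3
          ·
            obtain ⟨-,-,-,f1,f2,f3,f4,f5,f6,f7,f8,f9,f10,f11,f12,f13,f14,f15⟩ := hP (j)
            exact f8 ⟨e1, e2⟩
          ·
            obtain rfl := add_right_cancel h3
            exact hxz rfl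
    -- shape LLRR
    ·
      exact h3.elim
    -- shape LRLL
    ·
      rcases h1 with rfl | rfl
      ·
        rcases h2 with rfl | rfl
        ·
          rcases h3 with ⟨-, rfl | h3⟩
          ·
            exact hwy rfl
          ·
            obtain rfl := add_right_cancel h3
            exact hwy rfl
        ·
          rcases h3 with ⟨-, rfl | rfl⟩
          ·
            obtain ⟨-,-,-,f1,f2,f3,f4,f5,f6,f7,f8,f9,f10,f11,f12,f13,f14,f15⟩ := hP (k)
            exact f8 ⟨e2.symm, e1.symm⟩
          ·
            obtain ⟨-,-,-,f1,f2,f3,f4,f5,f6,f7,f8,f9,f10,f11,f12,f13,f14,f15⟩ := hP (l)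
            exact f4 ⟨e2.symm, e1.symm⟩
      ·
        rcases h2 with rfl | h2
        ·
          rcases h3 with ⟨-, rfl | h3⟩
          ·
            obtain ⟨-,-,-,f1,f2,f3,f4,f5,f6,f7,f8,f9,f10,f11,f12,f13,f14,f15⟩ := hP (i)
            exact f6 ⟨e1, e2⟩
          ·
            obtain rfl := add_right_cancel h3
            obtain ⟨-,-,-,f1,f2,f3,f4,f5,f6,f7,f8,f9,f10,f11,f12,f13,f14,f15⟩ := hP (i)
            exact f5 ⟨e1, e2⟩
        ·
          obtain rfl := add_right_cancel h2
          rcases h3 with ⟨-, rfl | rfl⟩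
          ·
            exact hwy rfl
          ·
            exact hwy rfl
    -- shape LRLR
    ·
      rcases h1 with rfl | rfl
      ·
        rcases h2 with rfl | rfl
        ·
          rcases h3 with h3 | rfl
          ·
            obtain rfl := add_right_cancel h3
            exact hwy rfl
          ·
            exact hwy rfl
        ·
          rcases h3 with rfl | rfl
          ·
            obtain ⟨-,-,-,f1,f2,f3,f4,f5,f6,f7,f8,f9,f10,f11,f12,f13,f14,f15⟩ := hP (l)
            exact f11 ⟨e1, e2⟩
          ·
            exact hxz rfl
      ·
        rcases h2 with rfl | h2
        ·
          rcases h3 with h3 | rfl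
          ·
            obtain rfl := add_right_cancel h3
            exact hxz rfl
          ·
            obtain ⟨-,-,-,f1,f2,f3,f4,f5,f6,f7,f8,f9,f10,f11,f12,f13,f14,f15⟩ := hP (i)
            exact f7 ⟨e1, e2⟩
        ·
          obtain rfl := add_right_cancel h2
          rcases h3 with rfl | rfl
          ·
            exact hwy rfl
          ·
            exact hwy rfl
    -- shape LRRL
    ·
      exact h2.elim
    -- shape LRRR
    ·
      exact h2.elim
    -- shape RLLL
    ·
      rcases h1 with rfl | rfl
      ·
        rcases h2 with ⟨-, rfl | h2⟩
        ·
          rcases h3 with ⟨-, rfl | h3⟩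
          ·
            obtain ⟨-,-,-,f1,f2,f3,f4,f5,f6,f7,f8,f9,f10,f11,f12,f13,f14,f15⟩ := hP (i)
            exact f10 ⟨e2.symm, e1.symm⟩
          ·
            obtain rfl := add_right_cancel h3
            exact hxz rfl
        ·
          obtain rfl := add_right_cancel h2
          rcases h3 with ⟨-, rfl | rfl⟩
          ·
            exact hxz rfl
          ·
            obtain ⟨-,-,-,f1,f2,f3,f4,f5,f6,f7,f8,f9,f10,f11,f12,f13,f14,f15⟩ := hP (l)
            exact f2 ⟨e2.symm, e1.symm⟩
      ·
        rcases h2 with ⟨-, rfl | rfl⟩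
        ·
          rcases h3 with ⟨-, rfl | h3⟩
          ·
            obtain ⟨-,-,-,f1,f2,f3,f4,f5,f6,f7,f8,f9,f10,f11,f12,f13,f14,f15⟩ := hP (j)
            exact f9 ⟨e2.symm, e1.symm⟩
          ·
            obtain rfl := add_right_cancel h3
            exact hxz rfl
        ·
          rcases h3 with ⟨-, rfl | rfl⟩
          ·
            exact hxz rfl
          ·
            obtain ⟨-,-,-,f1,f2,f3,f4,f5,f6,f7,f8,f9,f10,f11,f12,f13,f14,f15⟩ := hP (l)
            exact f3 ⟨e2.symm, e1.symm⟩
    -- shape RLLR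
    ·
      rcases h1 with rfl | rfl
      ·
        rcases h2 with ⟨-, rfl | h2⟩
        ·
          rcases h3 with h3 | rfl
          ·
            obtain rfl := add_right_cancel h3
            obtain ⟨-,-,-,f1,f2,f3,f4,f5,f6,f7,f8,f9,f10,f11,f12,f13,f14,f15⟩ := hP (i)
            exact f13 ⟨e1, e2⟩
          ·
            obtain ⟨-,-,-,f1,f2,f3,f4,f5,f6,f7,f8,f9,f10,f11,f12,f13,f14,f15⟩ := hP (i)
            exact f14 ⟨e1, e2⟩
        ·
          obtain rfl := add_right_cancel h2
          rcases h3 with rfl | rfl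
          ·
            obtain ⟨-,-,-,f1,f2,f3,f4,f5,f6,f7,f8,f9,f10,f11,f12,f13,f14,f15⟩ := hP (l)
            exact f13 ⟨e2.symm, e1.symm⟩
          ·
            obtain ⟨-,-,-,f1,f2,f3,f4,f5,f6,f7,f8,f9,f10,f11,f12,f13,f14,f15⟩ := hP (i)
            exact f12 ⟨e1, e2⟩
      ·
        rcases h2 with ⟨-, rfl | rfl⟩
        ·
          rcases h3 with h3 | rfl
          ·
            obtain rfl := add_right_cancel h3
            obtain ⟨-,-,-,f1,f2,f3,f4,f5,f6,f7,f8,f9,f10,f11,f12,f13,f14,f15⟩ := hP (j)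
            exact f12 ⟨e2.symm, e1.symm⟩
          ·
            obtain ⟨-,-,-,f1,f2,f3,f4,f5,f6,f7,f8,f9,f10,f11,f12,f13,f14,f15⟩ := hP (j)
            exact f15 ⟨e1, e2⟩
        ·
          rcases h3 with rfl | rfl
          ·
            obtain ⟨-,-,-,f1,f2,f3,f4,f5,f6,f7,f8,f9,f10,f11,f12,f13,f14,f15⟩ := hP (l)
            exact f14 ⟨e2.symm, e1.symm⟩
          ·
            obtain ⟨-,-,-,f1,f2,f3,f4,f5,f6,f7,f8,f9,f10,f11,f12,f13,f14,f15⟩ := hP (k)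
            exact f15 ⟨e2.symm, e1.symm⟩
    -- shape RLRL
    ·
      rcases h1 with rfl | rfl
      ·
        rcases h2 with h2 | rfl
        ·
          obtain rfl := add_right_cancel h2
          rcases h3 with rfl | rfl
          ·
            exact hwy rfl
          ·
            exact hwy rfl
        ·
          rcases h3 with rfl | h3
          ·
            obtain ⟨-,-,-,f1,f2,f3,f4,f5,f6,f7,f8,f9,f10,f11,f12,f13,f14,f15⟩ := hP (i)
            exact f11 ⟨e2.symm, e1.symm⟩
          ·
            obtain rfl := add_right_cancel h3
            exact hxz rfl
      ·
        rcases h2 with rfl | rfl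
        ·
          rcases h3 with rfl | rfl
          ·
            exact hxz rfl
          ·
            obtain ⟨-,-,-,f1,f2,f3,f4,f5,f6,f7,f8,f9,f10,f11,f12,f13,f14,f15⟩ := hP (l)
            exact f7 ⟨e2.symm, e1.symm⟩
        ·
          rcases h3 with rfl | h3
          ·
            exact hwy rfl
          ·
            obtain rfl := add_right_cancel h3
            exact hwy rfl
    -- shape RLRR
    ·
      exact h3.elim
    -- shape RRLL
    ·
      exact h1.elim
    -- shape RRLR
    ·
      exact h1.elim
    -- shape RRRL
    ·
      exact h1.elim
    -- shape RRRR
    ·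
      exact h1.elim
/-! ### The coloring for `3 ∣ n` -/

def emb3 : ZMod 3 → Fin 4 := fun x => ⟨x.val, lt_of_lt_of_le (ZMod.val_lt x) (by norm_num)⟩

def col0 {n : ℕ} (h : (3:ℕ) ∣ n) : ZMod n → Fin 4 × Fin 4 :=
  fun m => (emb3 (ZMod.castHom h (ZMod 3) m), (3 : Fin 4))

theorem master0 {n : ℕ} (h : (3:ℕ) ∣ n) :
    ∀ m : ZMod n, P (col0 h m) (col0 h (m+1)) (col0 h (m+1+1)) (col0 h (m+1+1+1)) := by
  intro m
  show P (emb3 (ZMod.castHom h (ZMod 3) m), 3) (emb3 (ZMod.castHom h (ZMod 3) (m+1)), 3)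
    (emb3 (ZMod.castHom h (ZMod 3) (m+1+1)), 3) (emb3 (ZMod.castHom h (ZMod 3) (m+1+1+1)), 3)
  simp only [map_add, map_one]
  generalize ZMod.castHom h (ZMod 3) m = x
  revert x; decide

/-! ### The coloring for `n % 3 = 2`, `n ≥ 8` -/

def preA : ℕ → Fin 4 := fun r => match r with | 0 => 0 | 1 => 1 | _ => 2
def preB : ℕ → Fin 4 := fun r => match r with | 0 => 3 | 1 => 3 | _ => 2
def tailA : ℕ → Fin 4 := fun j => match j with | 0 => 0 | 1 => 1 | 2 => 0 | 3 => 2 | _ => 1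
def tailB : ℕ → Fin 4 := fun j => match j with | 0 => 3 | 1 => 3 | 2 => 3 | 3 => 2 | _ => 3

def pat (n m : ℕ) : Fin 4 × Fin 4 :=
  if m < n - 5 then (preA (m % 3), preB (m % 3)) else (tailA (m - (n-5)), tailB (m - (n-5)))

lemma pat_pre (n m : ℕ) (h : m < n - 5) : pat n m = (preA (m % 3), preB (m % 3)) := if_pos h
lemma pat_tail (n m : ℕ) (h : ¬ m < n - 5) :
    pat n m = (tailA (m - (n-5)), tailB (m - (n-5))) := if_neg h

theorem natMaster {n : ℕ} (h8 : 8 ≤ n) (hmod : n % 3 = 2) (k : ℕ) (hk : k < n) :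
    P (pat n k) (pat n ((k+1)%n)) (pat n ((k+2)%n)) (pat n ((k+3)%n)) := by
  rcases lt_or_ge (k+3) (n-5) with hA | hB
  · -- all four in the prefix
    rw [Nat.mod_eq_of_lt (by omega), Nat.mod_eq_of_lt (by omega), Nat.mod_eq_of_lt (by omega),
      pat_pre n k (by omega), pat_pre n (k+1) (by omega), pat_pre n (k+2) (by omega),
      pat_pre n (k+3) (by omega)]
    have h0 : k % 3 = 0 ∨ k % 3 = 1 ∨ k % 3 = 2 := by omega
    rcases h0 with h0 | h0 | h0 <;>
      rw [h0, show (k+1)%3 = (k%3+1)%3 by omega, show (k+2)%3 = (k%3+2)%3 by omega,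
        show (k+3)%3 = k%3 by omega, h0] <;> decide
  · have hcases : k = n-8 ∨ k = n-7 ∨ k = n-6 ∨ k = n-5 ∨ k = n-4 ∨ k = n-3 ∨ k = n-2 ∨
        k = n-1 := by omega
    rcases hcases with hc | hc | hc | hc | hc | hc | hc | hc
    · rw [Nat.mod_eq_of_lt (by omega), Nat.mod_eq_of_lt (by omega), Nat.mod_eq_of_lt (by omega),
        pat_pre n k (by omega), pat_pre n (k+1) (by omega), pat_pre n (k+2) (by omega),
        pat_tail n (k+3) (by omega), show k % 3 = 0 by omega, show (k+1) % 3 = 1 by omega,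
        show (k+2) % 3 = 2 by omega, show k+3-(n-5) = 0 by omega]
      decide
    · rw [Nat.mod_eq_of_lt (by omega), Nat.mod_eq_of_lt (by omega), Nat.mod_eq_of_lt (by omega),
        pat_pre n k (by omega), pat_pre n (k+1) (by omega),
        pat_tail n (k+2) (by omega), pat_tail n (k+3) (by omega),
        show k % 3 = 1 by omega, show (k+1) % 3 = 2 by omega,
        show k+2-(n-5) = 0 by omega, show k+3-(n-5) = 1 by omega]
      decide
    · rw [Nat.mod_eq_of_lt (by omega), Nat.mod_eq_of_lt (by omega), Nat.mod_eq_of_lt (by omega),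
        pat_pre n k (by omega), pat_tail n (k+1) (by omega),
        pat_tail n (k+2) (by omega), pat_tail n (k+3) (by omega),
        show k % 3 = 2 by omega, show k+1-(n-5) = 0 by omega,
        show k+2-(n-5) = 1 by omega, show k+3-(n-5) = 2 by omega]
      decide
    · rw [Nat.mod_eq_of_lt (by omega), Nat.mod_eq_of_lt (by omega), Nat.mod_eq_of_lt (by omega),
        pat_tail n k (by omega), pat_tail n (k+1) (by omega),
        pat_tail n (k+2) (by omega), pat_tail n (k+3) (by omega),
        show k-(n-5) = 0 by omega, show k+1-(n-5) = 1 by omega,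
        show k+2-(n-5) = 2 by omega, show k+3-(n-5) = 3 by omega]
      decide
    · rw [Nat.mod_eq_of_lt (by omega), Nat.mod_eq_of_lt (by omega), Nat.mod_eq_of_lt (by omega),
        pat_tail n k (by omega), pat_tail n (k+1) (by omega),
        pat_tail n (k+2) (by omega), pat_tail n (k+3) (by omega),
        show k-(n-5) = 1 by omega, show k+1-(n-5) = 2 by omega,
        show k+2-(n-5) = 3 by omega, show k+3-(n-5) = 4 by omega]
      decide
    · -- k = n-3 : wrap at position 3
      rw [Nat.mod_eq_of_lt (by omega), Nat.mod_eq_of_lt (by omega),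
        show (k+3) % n = 0 by rw [show k+3 = n by omega]; exact Nat.mod_self n,
        pat_tail n k (by omega), pat_tail n (k+1) (by omega),
        pat_tail n (k+2) (by omega), pat_pre n 0 (by omega),
        show k-(n-5) = 2 by omega, show k+1-(n-5) = 3 by omega,
        show k+2-(n-5) = 4 by omega]
      decide
    · -- k = n-2
      rw [Nat.mod_eq_of_lt (by omega),
        show (k+2) % n = 0 by rw [show k+2 = n by omega]; exact Nat.mod_self n,
        show (k+3) % n = 1 by
          rw [show k+3 = n+1 by omega, Nat.add_mod_left, Nat.mod_eq_of_lt (by omega)],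
        pat_tail n k (by omega), pat_tail n (k+1) (by omega),
        pat_pre n 0 (by omega), pat_pre n 1 (by omega),
        show k-(n-5) = 3 by omega, show k+1-(n-5) = 4 by omega]
      decide
    · -- k = n-1
      rw [show (k+1) % n = 0 by rw [show k+1 = n by omega]; exact Nat.mod_self n,
        show (k+2) % n = 1 by
          rw [show k+2 = n+1 by omega, Nat.add_mod_left, Nat.mod_eq_of_lt (by omega)],
        show (k+3) % n = 2 by
          rw [show k+3 = n+2 by omega, Nat.add_mod_left, Nat.mod_eq_of_lt (by omega)],
        pat_tail n k (by omega), pat_pre n 0 (by omega),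
        pat_pre n 1 (by omega), pat_pre n 2 (by omega),
        show k-(n-5) = 4 by omega]
      decide

def col2 (n : ℕ) : ZMod n → Fin 4 × Fin 4 := fun m => pat n m.val

theorem master2 {n : ℕ} (h8 : 8 ≤ n) (hmod : n % 3 = 2) :
    ∀ m : ZMod n, P (col2 n m) (col2 n (m+1)) (col2 n (m+1+1)) (col2 n (m+1+1+1)) := by
  haveI : NeZero n := ⟨by omega⟩
  haveI : Fact (1 < n) := ⟨by omega⟩
  intro m
  have v1 : (m+1).val = (m.val + 1) % n := by rw [ZMod.val_add, ZMod.val_one]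
  have v2 : (m+1+1).val = (m.val + 2) % n := by
    rw [ZMod.val_add, ZMod.val_one, v1, Nat.mod_add_mod, show m.val+1+1 = m.val+2 by omega]
  have v3 : (m+1+1+1).val = (m.val + 3) % n := by
    rw [ZMod.val_add, ZMod.val_one, v2, Nat.mod_add_mod, show m.val+2+1 = m.val+3 by omega]
  show P (pat n m.val) (pat n (m+1).val) (pat n (m+1+1).val) (pat n (m+1+1+1).val)
  rw [v1, v2, v3]
  exact natMaster h8 hmod m.val (ZMod.val_lt m)
/-! ### Lower bound: no star coloring with 3 colors -/

theorem fin3_eq (x y z w : Fin 3) (hxy : x ≠ y) (hzx : z ≠ x) (hzy : z ≠ y)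
    (hwx : w ≠ x) (hwy : w ≠ y) : z = w := by revert hxy hzx hzy hwx hwy; revert x y z w; decide

theorem no3 {n : ℕ} (hn : 3 ≤ n) (c : ZMod n ⊕ ZMod n → Fin 3)
    (hc : IsStarColoring (splitCycle n) c) : False := by
  haveI : NeZero n := ⟨by omega⟩
  haveI : Fact (1 < n) := ⟨by omega⟩
  have hone : (1 : ZMod n) ≠ 0 := one_ne_zero
  have htwo : (2 : ZMod n) ≠ 0 := by
    intro h
    have h2 : ((2:ℕ) : ZMod n) = 0 := by exact_mod_cast h
    have := (ZMod.natCast_eq_zero_iff 2 n).mp h2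
    have := Nat.le_of_dvd (by norm_num) this
    omega
  set a : ZMod n → Fin 3 := fun i => c (.inl i) with ha
  set b : ZMod n → Fin 3 := fun i => c (.inr i) with hb
  have hq : ∀ i, a i ≠ a (i+1) := fun i => hc.1 (.inl i) (.inl (i+1))
    ⟨fun h => hone (by linear_combination -h), Or.inl rfl⟩
  have hr : ∀ i, b (i+1) ≠ a i := fun i => hc.1 (.inr (i+1)) (.inl i) (Or.inr rfl)
  have hs : ∀ i, b i ≠ a (i+1) := fun i => hc.1 (.inr i) (.inl (i+1)) (Or.inl rfl)
  have h3 : ∀ i, ¬(a i = a (i+1+1) ∧ a (i+1) = b (i+1)) := by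
    intro i
    exact hc.2 (.inl i) (.inl (i+1)) (.inl (i+1+1)) (.inr (i+1))
      ⟨fun h => hone (by linear_combination -h), Or.inl rfl⟩
      ⟨fun h => hone (by linear_combination -h), Or.inl rfl⟩
      (Or.inl rfl)
      (by intro h; exact htwo (by have h' := Sum.inl.inj h; linear_combination -h'))
      Sum.inl_ne_inr Sum.inl_ne_inr
  have h4 : ∀ i, ¬(b (i+1) = a (i+1) ∧ a i = b i) := by
    intro i
    exact hc.2 (.inr (i+1)) (.inl i) (.inl (i+1)) (.inr i)
      (Or.inr rfl)
      ⟨fun h => hone (by linear_combination -h), Or.inl rfl⟩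
      (Or.inl rfl)
      Sum.inr_ne_inl Sum.inl_ne_inr
      (by intro h; exact hone (by have h' := Sum.inr.inj h; linear_combination h'))
  have h6 : ∀ i, ¬(b i = b (i+1+1) ∧ a (i+1) = a (i+1+1+1)) := by
    intro i
    exact hc.2 (.inr i) (.inl (i+1)) (.inr (i+1+1)) (.inl (i+1+1+1))
      (Or.inl rfl) (Or.inr rfl) (Or.inl rfl)
      (by intro h; exact htwo (by have h' := Sum.inr.inj h; linear_combination -h'))
      (by intro h; exact htwo (by have h' := Sum.inl.inj h; linear_combination -h'))
      Sum.inr_ne_inl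
  by_cases hM : ∃ j, a (j+1) = b (j+1)
  · obtain ⟨j, hM⟩ := hM
    have hA : a j ≠ a (j+1+1) := fun h => h3 j ⟨h, hM⟩
    have hM1 : ¬(a (j+1+1) = b (j+1+1)) := fun h => h4 (j+1) ⟨h.symm, hM⟩
    have key : a (j+1) = a (j+1+1+1) := by
      by_contra hne
      exact hM1 (fin3_eq (a (j+1)) (a (j+1+1+1)) (a (j+1+1)) (b (j+1+1)) hne
        (hq (j+1)).symm (hq (j+1+1)) (hr (j+1)) (hs (j+1+1)))
    rcases eq_or_ne n 3 with h3' | h3'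
    · have hz : (3 : ZMod n) = 0 := by subst h3'; decide
      have he : j+1+1+1 = j := by linear_combination hz
      rw [he] at key
      exact hq j key.symm
    · have hthree : (3 : ZMod n) ≠ 0 := by
        intro h
        have h2 : ((3:ℕ) : ZMod n) = 0 := by exact_mod_cast h
        have := (ZMod.natCast_eq_zero_iff 3 n).mp h2
        have := Nat.le_of_dvd (by norm_num) this
        omega
      have hbf : b (j+1+1) = a j := fin3_eq (a (j+1)) (a (j+1+1)) (b (j+1+1)) (a j)
        (hq (j+1)) (hr (j+1)) (fun h => hM1 h.symm) (hq j) hA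
      -- the bad path inl j, inl (j+1), inr (j+1+1), inl (j+1+1+1)
      exact hc.2 (.inl j) (.inl (j+1)) (.inr (j+1+1)) (.inl (j+1+1+1))
        ⟨fun h => hone (by linear_combination -h), Or.inl rfl⟩
        (Or.inr rfl) (Or.inl rfl)
        Sum.inl_ne_inr
        (by intro h; exact htwo (by have h' := Sum.inl.inj h; linear_combination -h'))
        (by intro h; exact hthree (by have h' := Sum.inl.inj h; linear_combination -h'))
        ⟨hbf.symm, key⟩
  · push_neg at hM
    have hnM : ∀ i, a i ≠ b i := by
      intro i
      have h := hM (i - 1)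
      rwa [show i - 1 + 1 = i from by ring] at h
    have aper : ∀ i, a i = a (i+1+1) := by
      intro i; by_contra hne
      exact hnM (i+1) (fin3_eq (a i) (a (i+1+1)) (a (i+1)) (b (i+1)) hne
        (hq i).symm (hq (i+1)) (hr i) (hs (i+1)))
    have bper : ∀ i, b i = b (i+1+1) := by
      intro i
      exact fin3_eq (a (i+1)) (a (i+1+1)) (b i) (b (i+1+1)) (hq (i+1)) (hs i)
        (fun h => hnM i (by rw [← aper i] at h; exact h.symm))
        (hr (i+1)) (fun h => hnM (i+1+1) h.symm)
    exact h6 0 ⟨bper 0, aper (0+1)⟩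

/-! ### Main theorem -/

theorem stmt_4 (n : ℕ) (hn : 3 ≤ n) (h1 : n % 3 ≠ 1) (h5 : n ≠ 5) :
    starChromaticNumber (splitCycle n) = 4 := by
  have h4mem : 4 ∈ {k | ∃ c : (ZMod n ⊕ ZMod n) → Fin k, IsStarColoring (splitCycle n) c} := by
    have hmod : n % 3 = 0 ∨ n % 3 = 2 := by omega
    rcases hmod with h0 | h2
    · have hd : (3:ℕ) ∣ n := Nat.dvd_of_mod_eq_zero h0
      exact ⟨_, star_of_windows (col0 hd) (master0 hd)⟩
    · have h8 : 8 ≤ n := by omega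
      exact ⟨_, star_of_windows (col2 n) (master2 h8 h2)⟩
  have hlow : ∀ k ∈ {k | ∃ c : (ZMod n ⊕ ZMod n) → Fin k, IsStarColoring (splitCycle n) c},
      4 ≤ k := by
    intro k hk
    by_contra hlt
    push_neg at hlt
    obtain ⟨c, hcol⟩ := hk
    have h3le : k ≤ 3 := by omega
    set c3 : ZMod n ⊕ ZMod n → Fin 3 := fun v => Fin.castLE h3le (c v) with hc3def
    have hc3 : IsStarColoring (splitCycle n) c3 := by
      obtain ⟨hp, hst⟩ := hcol
      refine ⟨fun u v h he => hp u v h (Fin.castLE_injective h3le he), ?_⟩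
      intro w x y z a1 a2 a3 d1 d2 d3 hco
      exact hst w x y z a1 a2 a3 d1 d2 d3
        ⟨Fin.castLE_injective h3le hco.1, Fin.castLE_injective h3le hco.2⟩
    exact no3 hn c3 hc3
  exact le_antisymm (Nat.sInf_le h4mem) (le_csInf ⟨4, h4mem⟩ hlow)
end
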